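/- Let M be a weight sequence satisfying (M.2) and let ψ ∈ 𝒦^{(M)}(ℝ^d). Then for every h > 0 and every φ ∈ 𝒪^{M,h}_C(ℝ^d) there exists m ∈ ℕ such that sup_{(x,ξ)∈ℝ^{2d}} |V_ψ φ(x,ξ)| e^{−m|x| + ν_M(πhξ/√d)} < ∞. In other words, V_ψ maps 𝒪^{M,h}_C(ℝ^d) into C^∘_{exp;M,πh/√d}(ℝ^{2d}). -/

import Mathlib

open Filter MeasureTheory
open scoped BigOperators

noncomputable section

abbrev Rd (d : ℕ) := EuclideanSpace ℝ (Fin d)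

/-- Partial derivative in the `j`-th coordinate direction. -/
def dop {d : ℕ} {E : Type*} [NormedAddCommGroup E] [NormedSpace ℝ E]
    (j : Fin d) (f : Rd d → E) : Rd d → E :=
  fun x => fderiv ℝ f x (EuclideanSpace.single j (1:ℝ))

/-- Iterated partial derivative `∂^α` for a multi-index `α : Fin d → ℕ`. -/
def pD {d : ℕ} {E : Type*} [NormedAddCommGroup E] [NormedSpace ℝ E]
    (α : Fin d → ℕ) (f : Rd d → E) : Rd d → E :=
  (List.finRange d).foldr (fun j g => (dop j)^[α j] g) f

/-- Length `|α|` of a multi-index. -/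
def msize {d : ℕ} (α : Fin d → ℕ) : ℕ := ∑ j, α j

/-- `M` is a weight sequence: positive, normalized, `M_p^{1/p} → ∞`, log-convex. -/
def IsWeightSeq (M : ℕ → ℝ) : Prop :=
  (∀ p, 0 < M p) ∧ M 0 = 1 ∧ M 1 = 1 ∧
  Tendsto (fun p : ℕ => (M p) ^ ((p : ℝ)⁻¹)) atTop atTop ∧
  ∀ p : ℕ, 1 ≤ p → (M p)^2 ≤ M (p-1) * M (p+1)

/-- Condition (M.2) with explicit constants `C₀, H ≥ 1`. -/
def HasM2 (M : ℕ → ℝ) (C₀ H : ℝ) : Prop :=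
  1 ≤ C₀ ∧ 1 ≤ H ∧ ∀ p q : ℕ, M (p+q) ≤ C₀ * H^(p+q) * M p * M q

/-- Condition (M.2). -/
def M2 (M : ℕ → ℝ) : Prop := ∃ C₀ H, HasM2 M C₀ H

/-- Condition (M.2)*: `2 m_p ≤ m_{Np}` for `p ≥ p₀`. -/
def M2star (M : ℕ → ℝ) : Prop :=
  ∃ p₀ N : ℕ, 0 < p₀ ∧ 0 < N ∧
    ∀ p, p₀ ≤ p → 2 * (M p / M (p-1)) ≤ M (N*p) / M (N*p - 1)

/-- Associated function `ν_M(t) = sup_p log(t^p / M_p)`. -/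
def nuA (M : ℕ → ℝ) (t : ℝ) : ℝ := ⨆ p : ℕ, Real.log (t ^ p / M p)

/-- Short-time Fourier transform `V_ψ f(x,ξ) = ∫ f(t) conj(ψ(t-x)) e^{-2πi ξ·t} dt`. -/
def STFT {d : ℕ} (ψ f : Rd d → ℂ) (x ξ : Rd d) : ℂ :=
  ∫ t : Rd d, f t * (starRingEnd ℂ) (ψ (t - x)) *
    Complex.exp (-2 * Real.pi * Complex.I * ((inner ℝ ξ t : ℝ) : ℂ))

/-- `φ ∈ 𝒦^{(M)}(ℝ^d)` (Beurling type). -/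
def KBeu (d : ℕ) (M : ℕ → ℝ) (φ : Rd d → ℂ) : Prop :=
  ContDiff ℝ (⊤ : ℕ∞) φ ∧ ∀ k : ℝ, 0 < k → ∀ n : ℕ, ∃ C : ℝ,
    ∀ (α : Fin d → ℕ) (x : Rd d),
      k ^ msize α * ‖pD α φ x‖ * Real.exp ((n : ℝ) * ‖x‖) ≤ C * M (msize α)

/-- `φ ∈ 𝒦^{{M}}(ℝ^d)` (Roumieu type). -/
def KRou (d : ℕ) (M : ℕ → ℝ) (φ : Rd d → ℂ) : Prop :=
  ContDiff ℝ (⊤ : ℕ∞) φ ∧ ∃ k : ℝ, 0 < k ∧ ∀ n : ℕ, ∃ C : ℝ,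
    ∀ (α : Fin d → ℕ) (x : Rd d),
      k ^ msize α * ‖pD α φ x‖ * Real.exp ((n : ℝ) * ‖x‖) ≤ C * M (msize α)

/-- `φ ∈ 𝒪^{M,h}_C(ℝ^d)`: smooth with, for some `n`,
`sup_α sup_x h^{|α|}|∂^α φ(x)| e^{-n|x|}/M_α < ∞`. -/
def OC (d : ℕ) (M : ℕ → ℝ) (h : ℝ) (φ : Rd d → ℂ) : Prop :=
  ContDiff ℝ (⊤ : ℕ∞) φ ∧ ∃ n : ℕ, ∃ C : ℝ, ∀ (α : Fin d → ℕ) (x : Rd d),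
    h ^ msize α * ‖pD α φ x‖ ≤ C * M (msize α) * Real.exp ((n : ℝ) * ‖x‖)

/-!
For fixed `x`, `V_ψ φ (x, ·)` is the Fourier transform of `F t = φ t * conj (ψ (t - x))`.
Log-convexity gives `M_i M_j ≤ M_{i+j}`, so Leibniz's rule bounds `‖D^p F t‖` by
`C e^{n|x|} (2√d/h)^p M_p e^{-(d+1)|t-x|}`; the factor `√d^p` is the price of passing from the
partial derivatives controlled by the hypotheses to the full derivative. Since
`(2π|ξ|)^p |F̂ ξ| ≤ ‖D^p F‖_{L¹}`, this gives `(πh|ξ|/√d)^p |V_ψ φ (x, ξ)| ≤ C' e^{n|x|} M_p` for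
every `p`, and the supremum over `p` is `e^{ν_M(πh|ξ|/√d)}`.
-/

open scoped FourierTransform

section PartialDerivatives

variable {d : ℕ} {E : Type*} [NormedAddCommGroup E] [NormedSpace ℝ E]

def dopList (L : List (Fin d)) (f : Rd d → E) : Rd d → E := L.foldr dop f

@[simp] lemma dopList_nil (f : Rd d → E) : dopList [] f = f := rfl

@[simp] lemma dopList_cons (j : Fin d) (L : List (Fin d)) (f : Rd d → E) :
    dopList (j :: L) f = dop j (dopList L f) := rfl

lemma dopList_append (L₁ L₂ : List (Fin d)) (f : Rd d → E) :
    dopList (L₁ ++ L₂) f = dopList L₁ (dopList L₂ f) :=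
  List.foldr_append

lemma dopList_replicate_append (k : ℕ) (j : Fin d) (L : List (Fin d)) (f : Rd d → E) :
    dopList (List.replicate k j ++ L) f = (dop j)^[k] (dopList L f) := by
  induction k with
  | zero => rfl
  | succ k ih =>
    rw [List.replicate_succ, List.cons_append, dopList_cons, ih,
      Function.iterate_succ_apply']

def multiIndexList (α : Fin d → ℕ) : List (Fin d) :=
  (List.finRange d).flatMap fun j => List.replicate (α j) j

lemma pD_eq_dopList (α : Fin d → ℕ) (f : Rd d → E) : pD α f = dopList (multiIndexList α) f := by
  unfold pD multiIndexList
  induction List.finRange d with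
  | nil => rfl
  | cons j js ih => simp only [List.foldr_cons, List.flatMap_cons, ih, dopList_replicate_append]

lemma count_multiIndexList (α : Fin d → ℕ) (l : Fin d) : (multiIndexList α).count l = α l := by
  have key : ∀ js : List (Fin d), js.Nodup →
      (js.flatMap fun j => List.replicate (α j) j).count l = if l ∈ js then α l else 0 := by
    intro js
    induction js with
    | nil => simp
    | cons j js ih =>
      intro hnd
      rw [List.flatMap_cons, List.count_append, List.count_replicate, ih hnd.of_cons]
      rcases eq_or_ne l j with rfl | hne
      · simp [(List.nodup_cons.1 hnd).1]
      · simp [hne, Ne.symm hne]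
  rw [multiIndexList, key _ (List.nodup_finRange d), if_pos (List.mem_finRange l)]

lemma contDiff_fderiv_of_smooth {f : Rd d → E} (hf : ContDiff ℝ (⊤ : ℕ∞) f) :
    ContDiff ℝ (⊤ : ℕ∞) (fderiv ℝ f) :=
  hf.fderiv_right (by exact_mod_cast le_rfl)

lemma contDiff_dop {f : Rd d → E} (hf : ContDiff ℝ (⊤ : ℕ∞) f) (j : Fin d) :
    ContDiff ℝ (⊤ : ℕ∞) (dop j f) :=
  (contDiff_fderiv_of_smooth hf).clm_apply contDiff_const

lemma contDiff_dopList {f : Rd d → E} (hf : ContDiff ℝ (⊤ : ℕ∞) f) (L : List (Fin d)) :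
    ContDiff ℝ (⊤ : ℕ∞) (dopList L f) := by
  induction L with
  | nil => exact hf
  | cons j L ih => exact contDiff_dop ih j

lemma dop_comm {f : Rd d → E} (hf : ContDiff ℝ (⊤ : ℕ∞) f) (i j : Fin d) :
    dop i (dop j f) = dop j (dop i f) := by
  funext x
  have hdf : Differentiable ℝ (fderiv ℝ f) :=
    (contDiff_fderiv_of_smooth hf).differentiable (by simp)
  have hsecond : ∀ v w : Rd d,
      fderiv ℝ (fun y => fderiv ℝ f y v) x w = fderiv ℝ (fderiv ℝ f) x w v := by
    intro v w
    rw [fderiv_clm_apply (hdf x) (differentiableAt_const v)]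
    simp
  have hsymm := second_derivative_symmetric (f' := fderiv ℝ f)
    (fun y => (hf.differentiable (by simp) y).hasFDerivAt) (hdf x).hasFDerivAt
    (EuclideanSpace.single i (1 : ℝ)) (EuclideanSpace.single j 1)
  exact (hsecond _ _).trans (hsymm.trans (hsecond _ _).symm)

lemma dopList_perm {f : Rd d → E} (hf : ContDiff ℝ (⊤ : ℕ∞) f) {L₁ L₂ : List (Fin d)}
    (hL : L₁.Perm L₂) : dopList L₁ f = dopList L₂ f := by
  induction hL with
  | nil => rfl
  | cons j _ ih => simp only [dopList_cons, ih]
  | swap i j L => exact dop_comm (contDiff_dopList hf L) j i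
  | trans _ _ ih₁ ih₂ => rw [ih₁, ih₂]

lemma iteratedFDeriv_apply_single_eq_dopList :
    ∀ {n : ℕ} {f : Rd d → E}, ContDiff ℝ (⊤ : ℕ∞) f → ∀ (m : Fin n → Fin d) (x : Rd d),
      iteratedFDeriv ℝ n f x (fun i => EuclideanSpace.single (m i) 1) =
        dopList (List.ofFn m) f x
  | 0, f, _, m, x => by simp
  | n + 1, f, hf, m, x => by
    let ev := ContinuousLinearMap.apply ℝ E (EuclideanSpace.single (m (Fin.last n)) (1 : ℝ))
    have hcomp := ev.iteratedFDeriv_comp_left (contDiff_fderiv_of_smooth hf).contDiffAt (i := n)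
      (x := x) (by exact_mod_cast le_top)
    have hstep : iteratedFDeriv ℝ (n + 1) f x (fun i => EuclideanSpace.single (m i) 1) =
        iteratedFDeriv ℝ n (dop (m (Fin.last n)) f) x
          (fun i => EuclideanSpace.single (m i.castSucc) 1) := by
      rw [iteratedFDeriv_succ_apply_right, show dop (m (Fin.last n)) f = ev ∘ fderiv ℝ f from rfl,
        hcomp]
      rfl
    rw [hstep, iteratedFDeriv_apply_single_eq_dopList (contDiff_dop hf _) (fun i => m i.castSucc),
      List.ofFn_succ', List.concat_eq_append, dopList_append]
    rfl

lemma exists_pD_eq_iteratedFDeriv_apply_single {f : Rd d → E} (hf : ContDiff ℝ (⊤ : ℕ∞) f)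
    {n : ℕ} (m : Fin n → Fin d) (x : Rd d) :
    ∃ α : Fin d → ℕ, msize α = n ∧
      iteratedFDeriv ℝ n f x (fun i => EuclideanSpace.single (m i) 1) = pD α f x := by
  refine ⟨fun j => (List.ofFn m).count j, ?_, ?_⟩
  · simpa [msize] using Multiset.sum_count_eq_card (s := Finset.univ)
      (m := (List.ofFn m : Multiset (Fin d))) (by simp)
  · have hperm : (multiIndexList fun j => (List.ofFn m).count j).Perm (List.ofFn m) :=
      List.perm_iff_count.2 fun a => count_multiIndexList _ a
    rw [iteratedFDeriv_apply_single_eq_dopList hf, pD_eq_dopList, dopList_perm hf hperm]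

end PartialDerivatives

section DerivativeBounds

variable {d : ℕ} {E : Type*} [NormedAddCommGroup E] [NormedSpace ℝ E]

lemma sum_norm_le_sqrt_mul_norm (u : Rd d) : ∑ j, ‖u j‖ ≤ Real.sqrt d * ‖u‖ := by
  have hcs : (∑ j, ‖u j‖) ^ 2 ≤ d * ∑ j, ‖u j‖ ^ 2 := by
    simpa using sq_sum_le_card_mul_sum_sq (s := Finset.univ) (f := fun j => ‖u j‖)
  rw [EuclideanSpace.norm_eq, ← Real.sqrt_mul (Nat.cast_nonneg d)]
  exact Real.le_sqrt_of_sq_le hcs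

lemma opNorm_le_of_norm_apply_single_le {n : ℕ}
    (A : ContinuousMultilinearMap ℝ (fun _ : Fin n => Rd d) E) {S : ℝ} (hS : 0 ≤ S)
    (h : ∀ m : Fin n → Fin d, ‖A fun i => EuclideanSpace.single (m i) 1‖ ≤ S) :
    ‖A‖ ≤ Real.sqrt d ^ n * S := by
  refine A.opNorm_le_bound (by positivity) fun v => ?_
  have hexpand : A v = ∑ r ∈ Fintype.piFinset fun _ : Fin n => Finset.univ,
      (∏ i, v i (r i)) • A fun i => EuclideanSpace.single (r i) 1 := by
    conv_lhs => rw [show v = fun i => ∑ j, v i j • EuclideanSpace.single j 1 from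
      funext fun i => ((EuclideanSpace.basisFun (Fin d) ℝ).sum_repr (v i)).symm.trans (by simp)]
    rw [A.map_sum_finset]
    exact Finset.sum_congr rfl fun r _ => A.map_smul_univ _ _
  calc ‖A v‖ ≤ ∑ r ∈ Fintype.piFinset fun _ : Fin n => Finset.univ, (∏ i, ‖v i (r i)‖) * S := by
        rw [hexpand]
        refine (norm_sum_le _ _).trans (Finset.sum_le_sum fun r _ => ?_)
        rw [norm_smul, norm_prod]
        gcongr
        exact h r
    _ = (∏ i, ∑ j, ‖v i j‖) * S := by
        rw [← Finset.sum_mul, Finset.prod_univ_sum]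
    _ ≤ (∏ i, Real.sqrt d * ‖v i‖) * S := by
        gcongr with i
        exact sum_norm_le_sqrt_mul_norm (v i)
    _ = Real.sqrt d ^ n * S * ∏ i, ‖v i‖ := by
        rw [Finset.prod_mul_distrib, Finset.prod_const, Finset.card_univ, Fintype.card_fin]
        ring

lemma norm_iteratedFDeriv_le_of_norm_pD_le {f : Rd d → E} (hf : ContDiff ℝ (⊤ : ℕ∞) f)
    {n : ℕ} {x : Rd d} {S : ℝ} (hS : 0 ≤ S) (h : ∀ α, msize α = n → ‖pD α f x‖ ≤ S) :
    ‖iteratedFDeriv ℝ n f x‖ ≤ Real.sqrt d ^ n * S := by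
  refine opNorm_le_of_norm_apply_single_le _ hS fun m => ?_
  obtain ⟨α, hα, heq⟩ := exists_pD_eq_iteratedFDeriv_apply_single hf m x
  exact heq ▸ h α hα

lemma norm_iteratedFDeriv_le_of_pow_mul_norm_pD_le {M : ℕ → ℝ} (hM : ∀ p, 0 ≤ M p)
    {f : Rd d → E} (hf : ContDiff ℝ (⊤ : ℕ∞) f) {x : Rd d} {h B : ℝ} (hh : 0 < h) (hB : 0 ≤ B)
    (hb : ∀ α, h ^ msize α * ‖pD α f x‖ ≤ B * M (msize α)) (n : ℕ) :
    ‖iteratedFDeriv ℝ n f x‖ ≤ B * (Real.sqrt d / h) ^ n * M n := by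
  have hpD : ∀ α, msize α = n → ‖pD α f x‖ ≤ B * M n / h ^ n := by
    rintro α rfl
    rw [le_div_iff₀ (by positivity), mul_comm]
    exact hb α
  calc ‖iteratedFDeriv ℝ n f x‖ ≤ Real.sqrt d ^ n * (B * M n / h ^ n) :=
        norm_iteratedFDeriv_le_of_norm_pD_le hf (by have := hM n; positivity) hpD
    _ = B * (Real.sqrt d / h) ^ n * M n := by ring

lemma const_nonneg_of_pow_mul_norm_pD_le {M : ℕ → ℝ} (hM0 : 0 < M 0) {f : Rd d → E}
    {h C : ℝ} {w : Rd d → ℝ} (hw : 0 < w 0)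
    (hb : ∀ α t, h ^ msize α * ‖pD α f t‖ ≤ C * M (msize α) * w t) : 0 ≤ C := by
  have h00 := hb 0 0
  simp only [msize, Pi.zero_apply, Finset.sum_const_zero, pow_zero, one_mul] at h00
  nlinarith [norm_nonneg (pD 0 f 0), mul_pos hM0 hw]

end DerivativeBounds

section ConjTranslate

variable {d : ℕ}

lemma contDiff_conj_comp_sub {u : Rd d → ℂ} (hu : ContDiff ℝ (⊤ : ℕ∞) u) (x : Rd d) :
    ContDiff ℝ (⊤ : ℕ∞) fun s => starRingEnd ℂ (u (s - x)) :=
  Complex.conjCLE.toContinuousLinearMap.contDiff.comp (hu.comp (contDiff_id.sub contDiff_const))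

lemma dop_conj_comp_sub {u : Rd d → ℂ} (hu : Differentiable ℝ u) (x : Rd d) (j : Fin d) :
    dop j (fun s => starRingEnd ℂ (u (s - x))) = fun s => starRingEnd ℂ (dop j u (s - x)) := by
  funext t
  have hderiv : HasFDerivAt (fun s => starRingEnd ℂ (u (s - x)))
      (Complex.conjCLE.toContinuousLinearMap.comp (fderiv ℝ u (t - x))) t :=
    Complex.conjCLE.toContinuousLinearMap.hasFDerivAt.comp t
      ((hu (t - x)).hasFDerivAt.comp t ((hasFDerivAt_id t).sub_const x))
  simp only [dop, hderiv.fderiv]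
  rfl

lemma dopList_conj_comp_sub {u : Rd d → ℂ} (hu : ContDiff ℝ (⊤ : ℕ∞) u) (x : Rd d)
    (L : List (Fin d)) :
    dopList L (fun s => starRingEnd ℂ (u (s - x))) =
      fun s => starRingEnd ℂ (dopList L u (s - x)) := by
  induction L with
  | nil => rfl
  | cons j L ih =>
    rw [dopList_cons, ih, dop_conj_comp_sub ((contDiff_dopList hu L).differentiable (by simp))]
    rfl

lemma norm_pD_conj_comp_sub {u : Rd d → ℂ} (hu : ContDiff ℝ (⊤ : ℕ∞) u) (x : Rd d)
    (α : Fin d → ℕ) (t : Rd d) :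
    ‖pD α (fun s => starRingEnd ℂ (u (s - x))) t‖ = ‖pD α u (t - x)‖ := by
  rw [pD_eq_dopList, pD_eq_dopList, dopList_conj_comp_sub hu]
  exact RCLike.norm_conj _

end ConjTranslate

lemma mul_le_mul_add_of_sq_le_mul {M : ℕ → ℝ} (hpos : ∀ p, 0 < M p)
    (hconv : ∀ p : ℕ, 1 ≤ p → M p ^ 2 ≤ M (p - 1) * M (p + 1)) (a b : ℕ) :
    M a * M b ≤ M 0 * M (a + b) := by
  have hratio : Monotone fun k => M (k + 1) / M k := by
    refine monotone_nat_of_le_succ fun k => ?_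
    have := hconv (k + 1) (by omega)
    rw [Nat.add_sub_cancel] at this
    rw [div_le_div_iff₀ (hpos k) (hpos (k + 1))]
    nlinarith
  induction b with
  | zero => rw [add_zero, mul_comm]
  | succ b ih =>
    have hb := hratio (Nat.le_add_left b a)
    calc M a * M (b + 1) = M a * M b * (M (b + 1) / M b) := by
          field_simp [(hpos b).ne']
      _ ≤ M 0 * M (a + b) * (M (a + b + 1) / M (a + b)) := by
          gcongr
          · exact div_nonneg (hpos _).le (hpos _).le
          · exact mul_nonneg (hpos 0).le (hpos _).le
      _ = M 0 * M (a + (b + 1)) := by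
          field_simp [(hpos (a + b)).ne']
          rfl

lemma norm_iteratedFDeriv_mul_le_of_le {V 𝔸 : Type*} [NormedAddCommGroup V] [NormedSpace ℝ V]
    [NormedRing 𝔸] [NormedAlgebra ℝ 𝔸] {M : ℕ → ℝ} (hM : ∀ i j, M i * M j ≤ M (i + j))
    {f g : V → 𝔸} (hf : ContDiff ℝ (⊤ : ℕ∞) f) (hg : ContDiff ℝ (⊤ : ℕ∞) g) {x : V}
    {A B c : ℝ} (hA : 0 ≤ A) (hB : 0 ≤ B) (hc : 0 ≤ c)
    (hfb : ∀ i, ‖iteratedFDeriv ℝ i f x‖ ≤ A * c ^ i * M i)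
    (hgb : ∀ i, ‖iteratedFDeriv ℝ i g x‖ ≤ B * c ^ i * M i) (n : ℕ) :
    ‖iteratedFDeriv ℝ n (fun y => f y * g y) x‖ ≤ A * B * (2 * c) ^ n * M n := by
  calc ‖iteratedFDeriv ℝ n (fun y => f y * g y) x‖
      ≤ ∑ i ∈ Finset.range (n + 1),
          (n.choose i : ℝ) * ‖iteratedFDeriv ℝ i f x‖ * ‖iteratedFDeriv ℝ (n - i) g x‖ :=
        norm_iteratedFDeriv_mul_le hf hg x (by exact_mod_cast le_top)
    _ ≤ ∑ i ∈ Finset.range (n + 1), (n.choose i : ℝ) * (A * B * c ^ n * M n) := by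
        refine Finset.sum_le_sum fun i hi => ?_
        have hin : i + (n - i) = n := Nat.add_sub_cancel' (Finset.mem_range_succ_iff.1 hi)
        rw [mul_assoc]
        refine mul_le_mul_of_nonneg_left ?_ (Nat.cast_nonneg _)
        calc ‖iteratedFDeriv ℝ i f x‖ * ‖iteratedFDeriv ℝ (n - i) g x‖
            ≤ (A * c ^ i * M i) * (B * c ^ (n - i) * M (n - i)) :=
              mul_le_mul (hfb i) (hgb _) (norm_nonneg _) ((norm_nonneg _).trans (hfb i))
          _ = A * B * c ^ (i + (n - i)) * (M i * M (n - i)) := by ring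
          _ ≤ A * B * c ^ n * M n := by
              rw [hin]
              gcongr
              simpa [hin] using hM i (n - i)
    _ = A * B * (2 * c) ^ n * M n := by
        rw [← Finset.sum_mul, ← Nat.cast_sum, Nat.sum_range_choose]
        push_cast
        ring

lemma integrable_exp_neg_mul_norm {E : Type*} [NormedAddCommGroup E] [NormedSpace ℝ E]
    [FiniteDimensional ℝ E] [MeasurableSpace E] [BorelSpace E] (μ : Measure E)
    [μ.IsAddHaarMeasure] {r : ℝ} (hr : (Module.finrank ℝ E : ℝ) < r) :
    Integrable (fun x => Real.exp (-(r * ‖x‖))) μ := by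
  have hr0 : 0 ≤ r := (Nat.cast_nonneg _).trans hr.le
  refine (integrable_one_add_norm hr).mono' (by fun_prop) (ae_of_all _ fun x => ?_)
  rw [Real.norm_of_nonneg (Real.exp_pos _).le, Real.rpow_def_of_pos (by positivity)]
  gcongr
  -- `1 + s ≤ exp s` makes `exp (-r s)` smaller than `(1 + s) ^ (-r)`
  have := Real.log_le_sub_one_of_pos (by positivity : (0 : ℝ) < 1 + ‖x‖)
  nlinarith

lemma pow_mul_norm_fourier_le_integral_norm_iteratedFDeriv {V E : Type*}
    [NormedAddCommGroup V] [InnerProductSpace ℝ V] [FiniteDimensional ℝ V] [MeasurableSpace V]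
    [BorelSpace V] [NormedAddCommGroup E] [NormedSpace ℂ E] {f : V → E}
    (hf : ContDiff ℝ (⊤ : ℕ∞) f) (hint : ∀ n : ℕ, Integrable (iteratedFDeriv ℝ n f))
    (n : ℕ) (ξ : V) :
    (2 * Real.pi * ‖ξ‖) ^ n * ‖𝓕 f ξ‖ ≤ ∫ v, ‖iteratedFDeriv ℝ n f v‖ := by
  by_cases hξn : ‖ξ‖ ^ n = 0
  · rw [mul_pow, hξn, mul_zero, zero_mul]
    exact integral_nonneg fun v => norm_nonneg _
  have hderiv : ‖𝓕 (iteratedFDeriv ℝ n f) ξ fun _ => ξ‖ =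
      (2 * Real.pi * ‖ξ‖) ^ n * ‖𝓕 f ξ‖ * ‖ξ‖ ^ n := by
    rw [Real.fourier_iteratedFDeriv hf (fun k _ => hint k) (le_top : (n : ℕ∞) ≤ ⊤),
      VectorFourier.fourierPowSMulRight_apply]
    have hinner : innerSL ℝ ξ ξ = ‖ξ‖ ^ 2 := real_inner_self_eq_norm_sq ξ
    simp only [norm_smul, norm_pow, norm_neg, norm_mul, Complex.norm_I, Complex.norm_ofNat,
      Complex.norm_real, Real.norm_of_nonneg Real.pi_pos.le, Finset.prod_const, Finset.card_univ,
      Fintype.card_fin, neg_apply, hinner, Real.norm_eq_abs, abs_norm]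
    ring
  refine le_of_mul_le_mul_right ?_ (lt_of_le_of_ne (by positivity) (Ne.symm hξn))
  calc (2 * Real.pi * ‖ξ‖) ^ n * ‖𝓕 f ξ‖ * ‖ξ‖ ^ n
      = ‖𝓕 (iteratedFDeriv ℝ n f) ξ fun _ => ξ‖ := hderiv.symm
    _ ≤ ‖𝓕 (iteratedFDeriv ℝ n f) ξ‖ * ∏ _i : Fin n, ‖ξ‖ := ContinuousMultilinearMap.le_opNorm _ _
    _ ≤ (∫ v, ‖iteratedFDeriv ℝ n f v‖) * ‖ξ‖ ^ n := by
        rw [Finset.prod_const, Finset.card_univ, Fintype.card_fin]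
        gcongr
        exact VectorFourier.norm_fourierIntegral_le_integral_norm _ _ _ _ _

lemma le_mul_exp_neg_nuA {M : ℕ → ℝ} (hpos : ∀ p, 0 < M p) (h0 : M 0 = 1) {T V B : ℝ}
    (hT : 0 ≤ T) (hV : 0 ≤ V) (h : ∀ p : ℕ, T ^ p * V ≤ B * M p) :
    V ≤ B * Real.exp (-nuA M T) := by
  have hVB : V ≤ B := by simpa [h0] using h 0
  rcases hV.eq_or_lt with rfl | hV
  · exact mul_nonneg hVB (Real.exp_pos _).le
  have hnu : nuA M T ≤ Real.log (B / V) := by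
    refine ciSup_le fun p => ?_
    rcases (pow_nonneg hT p).eq_or_lt with hTp | hTp
    · rw [← hTp, zero_div, Real.log_zero]
      exact Real.log_nonneg ((one_le_div hV).2 hVB)
    · refine Real.log_le_log (div_pos hTp (hpos p)) ?_
      rw [div_le_div_iff₀ (hpos p) hV]
      exact h p
  rw [Real.exp_neg, ← div_eq_mul_inv, le_div_iff₀ (Real.exp_pos _), ← le_div_iff₀' hV]
  calc Real.exp (nuA M T) ≤ Real.exp (Real.log (B / V)) := Real.exp_le_exp.2 hnu
    _ = B / V := Real.exp_log (div_pos (hV.trans_le hVB) hV)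

lemma div_pow_mul_le_of_pow_mul_le_mul_pow {a c V B : ℝ} (hc : 0 ≤ c) (hB : 0 ≤ B) {p : ℕ}
    (h : a ^ p * V ≤ B * c ^ p) : (a / c) ^ p * V ≤ B :=
  calc (a / c) ^ p * V = a ^ p * V * c⁻¹ ^ p := by ring
    _ ≤ B * c ^ p * c⁻¹ ^ p := mul_le_mul_of_nonneg_right h (by positivity)
    _ = B * (c * c⁻¹) ^ p := by ring
    _ ≤ B := mul_le_of_le_one_right hB (pow_le_one₀ (by positivity) mul_inv_le_one)

section ShortTimeFourier

variable {d : ℕ}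

lemma stft_eq_fourier (ψ f : Rd d → ℂ) (x ξ : Rd d) :
    STFT ψ f x ξ = 𝓕 (fun t => f t * starRingEnd ℂ (ψ (t - x))) ξ := by
  rw [Real.fourier_eq', STFT]
  refine integral_congr_ae (ae_of_all _ fun t => ?_)
  dsimp only
  rw [smul_eq_mul, real_inner_comm t ξ]
  push_cast
  ring_nf

lemma norm_iteratedFDeriv_stft_integrand_le {M : ℕ → ℝ} (hMpos : ∀ p, 0 < M p)
    (hMmul : ∀ i j, M i * M j ≤ M (i + j)) {φ ψ : Rd d → ℂ} (hφ : ContDiff ℝ (⊤ : ℕ∞) φ)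
    (hψ : ContDiff ℝ (⊤ : ℕ∞) ψ) {h Cφ Cψ : ℝ} {n : ℕ} (hh : 0 < h)
    (hφb : ∀ α t, h ^ msize α * ‖pD α φ t‖ ≤ Cφ * M (msize α) * Real.exp (n * ‖t‖))
    (hψb : ∀ α t,
      h ^ msize α * ‖pD α ψ t‖ ≤ Cψ * M (msize α) * Real.exp (-((n + d + 1) * ‖t‖)))
    (x t : Rd d) (p : ℕ) :
    ‖iteratedFDeriv ℝ p (fun s => φ s * starRingEnd ℂ (ψ (s - x))) t‖ ≤
      Cφ * Cψ * Real.exp (n * ‖x‖) * (2 * Real.sqrt d / h) ^ p * M p *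
        Real.exp (-((d + 1) * ‖t - x‖)) := by
  have hCφ := const_nonneg_of_pow_mul_norm_pD_le (hMpos 0) (Real.exp_pos _) hφb
  have hCψ := const_nonneg_of_pow_mul_norm_pD_le (hMpos 0) (Real.exp_pos _) hψb
  have hg := contDiff_conj_comp_sub hψ x
  have hDφ := norm_iteratedFDeriv_le_of_pow_mul_norm_pD_le (fun p => (hMpos p).le) hφ hh
    (B := Cφ * Real.exp (n * ‖t‖)) (by positivity)
    fun α => (hφb α t).trans_eq (by ring)
  have hDg := norm_iteratedFDeriv_le_of_pow_mul_norm_pD_le (fun p => (hMpos p).le) hg hh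
    (B := Cψ * Real.exp (-((n + d + 1) * ‖t - x‖))) (by positivity)
    fun α => by rw [norm_pD_conj_comp_sub hψ]; exact (hψb α (t - x)).trans_eq (by ring)
  have hexp : Real.exp (n * ‖t‖) * Real.exp (-((n + d + 1) * ‖t - x‖)) ≤
      Real.exp (n * ‖x‖) * Real.exp (-((d + 1) * ‖t - x‖)) := by
    rw [← Real.exp_add, ← Real.exp_add, Real.exp_le_exp]
    nlinarith [norm_sub_norm_le t x, (Nat.cast_nonneg n : (0 : ℝ) ≤ n)]
  calc ‖iteratedFDeriv ℝ p (fun s => φ s * starRingEnd ℂ (ψ (s - x))) t‖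
      ≤ Cφ * Real.exp (n * ‖t‖) * (Cψ * Real.exp (-((n + d + 1) * ‖t - x‖))) *
          (2 * (Real.sqrt d / h)) ^ p * M p :=
        norm_iteratedFDeriv_mul_le_of_le hMmul hφ hg (by positivity) (by positivity)
          (by positivity) hDφ hDg p
    _ = Cφ * Cψ * (2 * Real.sqrt d / h) ^ p * M p *
          (Real.exp (n * ‖t‖) * Real.exp (-((n + d + 1) * ‖t - x‖))) := by ring
    _ ≤ Cφ * Cψ * (2 * Real.sqrt d / h) ^ p * M p *
          (Real.exp (n * ‖x‖) * Real.exp (-((d + 1) * ‖t - x‖))) :=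
        mul_le_mul_of_nonneg_left hexp (by have := hMpos p; positivity)
    _ = _ := by ring

lemma pow_mul_norm_stft_le {M : ℕ → ℝ} (hMpos : ∀ p, 0 < M p)
    (hMmul : ∀ i j, M i * M j ≤ M (i + j)) {φ ψ : Rd d → ℂ} (hφ : ContDiff ℝ (⊤ : ℕ∞) φ)
    (hψ : ContDiff ℝ (⊤ : ℕ∞) ψ) {h Cφ Cψ : ℝ} {n : ℕ} (hh : 0 < h)
    (hφb : ∀ α t, h ^ msize α * ‖pD α φ t‖ ≤ Cφ * M (msize α) * Real.exp (n * ‖t‖))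
    (hψb : ∀ α t,
      h ^ msize α * ‖pD α ψ t‖ ≤ Cψ * M (msize α) * Real.exp (-((n + d + 1) * ‖t‖)))
    (x ξ : Rd d) (p : ℕ) :
    (2 * Real.pi * ‖ξ‖) ^ p * ‖STFT ψ φ x ξ‖ ≤
      Cφ * Cψ * (∫ t : Rd d, Real.exp (-((d + 1) * ‖t‖))) * Real.exp (n * ‖x‖) *
        (2 * Real.sqrt d / h) ^ p * M p := by
  set F : Rd d → ℂ := fun s => φ s * starRingEnd ℂ (ψ (s - x))
  have hF : ContDiff ℝ (⊤ : ℕ∞) F := hφ.mul (contDiff_conj_comp_sub hψ x)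
  have hbound := norm_iteratedFDeriv_stft_integrand_le hMpos hMmul hφ hψ hh hφb hψb x
  have hw : Integrable fun t : Rd d => Real.exp (-((d + 1) * ‖t - x‖)) :=
    (integrable_exp_neg_mul_norm volume (by simp)).comp_sub_right x
  have hint : ∀ k, Integrable (iteratedFDeriv ℝ k F) := fun k =>
    (hw.const_mul _).mono'
      (hF.continuous_iteratedFDeriv (by exact_mod_cast le_top)).aestronglyMeasurable
      (ae_of_all _ fun t => hbound t k)
  rw [stft_eq_fourier]
  calc (2 * Real.pi * ‖ξ‖) ^ p * ‖𝓕 F ξ‖ ≤ ∫ t, ‖iteratedFDeriv ℝ p F t‖ :=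
        pow_mul_norm_fourier_le_integral_norm_iteratedFDeriv hF hint p ξ
    _ ≤ ∫ t, Cφ * Cψ * Real.exp (n * ‖x‖) * (2 * Real.sqrt d / h) ^ p * M p *
          Real.exp (-((d + 1) * ‖t - x‖)) :=
        integral_mono (hint p).norm (hw.const_mul _) fun t => hbound t p
    _ = _ := by
        rw [integral_const_mul, integral_sub_right_eq_self fun t => Real.exp (-((d + 1) * ‖t‖))]
        ring

end ShortTimeFourier

theorem stmt8_general (d : ℕ) (M : ℕ → ℝ) (hM : IsWeightSeq M)
    (ψ : Rd d → ℂ) (hψ : KBeu d M ψ)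
    (h : ℝ) (hh : 0 < h) (φ : Rd d → ℂ) (hφ : OC d M h φ) :
    ∃ m : ℕ, ∃ C : ℝ, ∀ x ξ : Rd d,
      ‖STFT ψ φ x ξ‖ ≤
        C * Real.exp ((m : ℝ) * ‖x‖ - nuA M (Real.pi * h * ‖ξ‖ / Real.sqrt d)) := by
  obtain ⟨hMpos, hM0, -, -, hMconv⟩ := hM
  obtain ⟨hφs, n, Cφ, hφb⟩ := hφ
  -- decay rate `n + d + 1` absorbs the growth `e^{n|t|}` of `φ` and leaves the integrable
  -- weight `e^{-(d+1)|t-x|}`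
  obtain ⟨Cψ, hψb⟩ := hψ.2 h hh (n + d + 1)
  have hψb' : ∀ α t, h ^ msize α * ‖pD α ψ t‖ ≤
      Cψ * M (msize α) * Real.exp (-(((n : ℝ) + d + 1) * ‖t‖)) := fun α t => by
    rw [Real.exp_neg, ← div_eq_mul_inv, le_div_iff₀ (Real.exp_pos _)]
    exact_mod_cast hψb α t
  have hMmul : ∀ i j, M i * M j ≤ M (i + j) := fun i j => by
    simpa [hM0] using mul_le_mul_add_of_sq_le_mul hMpos hMconv i j
  have hCφ := const_nonneg_of_pow_mul_norm_pD_le (hMpos 0) (Real.exp_pos _) hφb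
  have hCψ := const_nonneg_of_pow_mul_norm_pD_le (hMpos 0) (Real.exp_pos _) hψb'
  set K := Cφ * Cψ * ∫ t : Rd d, Real.exp (-(((d : ℝ) + 1) * ‖t‖))
  refine ⟨n, K, fun x ξ => ?_⟩
  rw [Real.exp_sub, div_eq_mul_inv, ← Real.exp_neg, ← mul_assoc]
  refine le_mul_exp_neg_nuA hMpos hM0 (by positivity) (norm_nonneg _) fun p => ?_
  rw [show Real.pi * h * ‖ξ‖ / Real.sqrt d = 2 * Real.pi * ‖ξ‖ / (2 * Real.sqrt d / h) by
    rw [div_div_eq_mul_div]; ring]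
  exact div_pow_mul_le_of_pow_mul_le_mul_pow (by positivity) (by have := hMpos p; positivity)
    ((pow_mul_norm_stft_le hMpos hMmul hφs hψ.1 hh hφb hψb' x ξ p).trans_eq (by ring))

/-- Mapping property of the STFT on the convolutor space `𝒪^{M,h}_C` (Lemma 5.4(ii)):
`V_ψ : 𝒪^{M,h}_C(ℝ^d) → C^∘_{exp;M,πh/√d}(ℝ^{2d})`. -/
theorem stmt8 (d : ℕ) (M : ℕ → ℝ) (hM : IsWeightSeq M) (hM2 : M2 M)
    (ψ : Rd d → ℂ) (hψ : KBeu d M ψ)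
    (h : ℝ) (hh : 0 < h) (φ : Rd d → ℂ) (hφ : OC d M h φ) :
    ∃ m : ℕ, ∃ C : ℝ, ∀ x ξ : Rd d,
      ‖STFT ψ φ x ξ‖ ≤
        C * Real.exp ((m : ℝ) * ‖x‖ - nuA M (Real.pi * h * ‖ξ‖ / Real.sqrt d)) :=
  stmt8_general d M hM ψ hψ h hh φ hφ
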